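/- Let F(S) = sup over real φ of min over integers s with 1 ≤ s ≤ S of |sin(sφ)|. Then F(S) ≤ π/S for all natural numbers S ≥ 1. -/
import Mathlib

/-- Upper bound: `F(S) = sup_φ min_{1 ≤ s ≤ S} |sin(sφ)| ≤ π/S` for `S ≥ 1`. -/
theorem stmt_8 (S : ℕ) (hS : 1 ≤ S) :
    (⨆ φ : ℝ, (Finset.Icc 1 S).inf' (Finset.nonempty_Icc.mpr hS)
      (fun s : ℕ => |Real.sin (s * φ)|)) ≤ Real.pi / S := by
  have hπ := Real.pi_pos
  have hSpos : (0:ℝ) < S := by exact_mod_cast hS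
  apply ciSup_le
  intro φ
  obtain ⟨k, hk0, hkS, hk⟩ := Real.exists_nat_abs_mul_sub_round_le (φ / Real.pi) (n := S)
    (by omega)
  refine le_trans (Finset.inf'_le _ (Finset.mem_Icc.mpr ⟨hk0, hkS⟩)) ?_
  set m : ℤ := round ((k : ℝ) * (φ / Real.pi))
  have key : (k : ℝ) * φ = ((k : ℝ) * (φ / Real.pi) - m) * Real.pi + m * Real.pi := by
    field_simp; ring
  rw [key, Real.sin_add_int_mul_pi, abs_mul]
  calc |(-1 : ℝ) ^ m| * |Real.sin (((k:ℝ) * (φ / Real.pi) - m) * Real.pi)|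
      ≤ 1 * |((k:ℝ) * (φ / Real.pi) - m) * Real.pi| := by
        apply mul_le_mul _ (Real.abs_sin_le_abs) (abs_nonneg _) zero_le_one
        rcases Int.even_or_odd m with h | h
        · simp [h.neg_one_zpow]
        · simp [Odd.neg_one_zpow h]
    _ = |(k:ℝ) * (φ / Real.pi) - m| * Real.pi := by
        rw [one_mul, abs_mul, abs_of_pos hπ]
    _ ≤ 1 / (S + 1) * Real.pi := by gcongr
    _ ≤ Real.pi / S := by
        rw [div_mul_eq_mul_div, one_mul, div_le_div_iff₀ (by positivity) hSpos]
        nlinarith
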